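/- arXiv:1508.03901 — 2 statements merged into one kernel-verified Lean document; each statement's English description precedes it below -/
import Mathlib

section
/- If P →* Q and a is a name in Names(P) \ Names(Q), then there exist processes P_a and P'_a with P →* P_a → P'_a →* Q, Names(P_a) = Names(P'_a) ⊎ {a} (disjoint union), and sync(a, P_a) holds. -/
/-- Finite CCS processes: 0, input prefix a.P, output prefix ā.P, parallel. -/
inductive Proc : Type where
  | nil : Proc
  | inp : ℕ → Proc → Proc
  | out : ℕ → Proc → Proc
  | par : Proc → Proc → Proc

open Proc

/-- Structural equivalence: smallest congruence with unit, commutativity, associativity. -/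
inductive StrEq : Proc → Proc → Prop where
  | refl (P) : StrEq P P
  | symm {P Q} : StrEq P Q → StrEq Q P
  | trans {P Q R} : StrEq P Q → StrEq Q R → StrEq P R
  | nilPar (P) : StrEq (par P nil) P
  | comm (P Q) : StrEq (par P Q) (par Q P)
  | assoc (P Q R) : StrEq (par P (par Q R)) (par (par P Q) R)
  | congPar {P P' Q Q'} : StrEq P P' → StrEq Q Q' → StrEq (par P Q) (par P' Q')
  | congInp (a) {P P'} : StrEq P P' → StrEq (inp a P) (inp a P')
  | congOut (a) {P P'} : StrEq P P' → StrEq (out a P) (out a P')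

/-- Reduction: a.P ‖ ā.Q → P ‖ Q, closed under parallel contexts and ≡. -/
inductive Red : Proc → Proc → Prop where
  | comm (a P Q) : Red (par (inp a P) (out a Q)) (par P Q)
  | parL {P P'} (Q) : Red P P' → Red (par P Q) (par P' Q)
  | parR (P) {Q Q'} : Red Q Q' → Red (par P Q) (par P Q')
  | str {P P' Q Q'} : StrEq P P' → Red P' Q' → StrEq Q' Q → Red P Q

/-- Reflexive-transitive closure of reduction. -/
def Reds : Proc → Proc → Prop := Relation.ReflTransGen Red

/-- The set of names occurring in a process (ignoring polarity). -/
def names : Proc → Finset ℕ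
  | nil => ∅
  | inp a P => insert a (names P)
  | out a P => insert a (names P)
  | par P Q => names P ∪ names Q

/-- Number of input occurrences of a name. -/
def inCount (a : ℕ) : Proc → ℕ
  | nil => 0
  | inp b P => (if b = a then 1 else 0) + inCount a P
  | out _ P => inCount a P
  | par P Q => inCount a P + inCount a Q

/-- Number of output occurrences of a name. -/
def outCount (a : ℕ) : Proc → ℕ
  | nil => 0
  | inp _ P => outCount a P
  | out b P => (if b = a then 1 else 0) + outCount a P
  | par P Q => outCount a P + outCount a Q

/-- Linearity: each name occurs at most once as input and at most once as output. -/
def Linear (P : Proc) : Prop := ∀ a, inCount a P ≤ 1 ∧ outCount a P ≤ 1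

/-- in(a,P): P ≡ P' ‖ a.P''. -/
def InPred (a : ℕ) (P : Proc) : Prop := ∃ P' P'', StrEq P (par P' (inp a P''))

/-- out(a,P): P ≡ P' ‖ ā.P''. -/
def OutPred (a : ℕ) (P : Proc) : Prop := ∃ P' P'', StrEq P (par P' (out a P''))

/-- sync(a,P): both in(a,P) and out(a,P). -/
def SyncPred (a : ℕ) (P : Proc) : Prop := InPred a P ∧ OutPred a P

/-- wait(a,P): in(a,P) exclusive-or out(a,P). -/
def WaitPred (a : ℕ) (P : Proc) : Prop := Xor' (InPred a P) (OutPred a P)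

/-- Process contexts C ::= [-] | P‖C | C‖P | α.C. -/
inductive Ctx : Type where
  | hole : Ctx
  | parL : Proc → Ctx → Ctx
  | parR : Ctx → Proc → Ctx
  | inp : ℕ → Ctx → Ctx
  | out : ℕ → Ctx → Ctx

/-- Filling a process context. -/
def Ctx.fill : Ctx → Proc → Proc
  | .hole, Q => Q
  | .parL P C, Q => Proc.par P (C.fill Q)
  | .parR C P, Q => Proc.par (C.fill Q) P
  | .inp a C, Q => Proc.inp a (C.fill Q)
  | .out a C, Q => Proc.out a (C.fill Q)

/-- Evaluation contexts E ::= [-] | P‖E | E‖P. -/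
inductive ECtx : Type where
  | hole : ECtx
  | parL : Proc → ECtx → ECtx
  | parR : ECtx → Proc → ECtx

/-- Filling an evaluation context. -/
def ECtx.fill : ECtx → Proc → Proc
  | .hole, Q => Q
  | .parL P E, Q => Proc.par P (E.fill Q)
  | .parR E P, Q => Proc.par (E.fill Q) P

/-- cin(a,P): an input prefix on a occurs anywhere in P. -/
def CInPred (a : ℕ) (P : Proc) : Prop := ∃ (C : Ctx) (Q : Proc), StrEq P (C.fill Q) ∧ InPred a Q

/-- cout(a,P): an output prefix on a occurs anywhere in P. -/
def COutPred (a : ℕ) (P : Proc) : Prop := ∃ (C : Ctx) (Q : Proc), StrEq P (C.fill Q) ∧ OutPred a Q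

/-- P is complete: ∀a. cin(a,P) ⟺ cout(a,P). -/
def Complete (P : Proc) : Prop := ∀ a, CInPred a P ↔ COutPred a P

/-- P is top-complete. -/
def TopComplete (P : Proc) : Prop :=
  ∀ a, (InPred a P → COutPred a P) ∧ (OutPred a P → CInPred a P)

/-- dl(P): P has no reduction and P ≢ 0. -/
def Deadlock (P : Proc) : Prop := (¬ ∃ Q, Red P Q) ∧ ¬ StrEq P nil

/-- Lock-freedom. -/
def LockFree (P : Proc) : Prop :=
  ∀ Q a, Reds P Q → WaitPred a Q → ∃ R, Reds Q R ∧ SyncPred a R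

lemma strEq_names {P Q : Proc} (h : StrEq P Q) : names P = names Q := by
  induction h with
  | refl => rfl
  | symm _ ih => exact ih.symm
  | trans _ _ ih1 ih2 => exact ih1.trans ih2
  | nilPar P => simp [names]
  | comm P Q => simp [names, Finset.union_comm]
  | assoc P Q R => simp [names, Finset.union_assoc]
  | congPar _ _ ih1 ih2 => simp [names, ih1, ih2]
  | congInp a _ ih => simp [names, ih]
  | congOut a _ ih => simp [names, ih]

lemma syncPred_strEq {a : ℕ} {P Q : Proc} (h : StrEq P Q) (hs : SyncPred a Q) :
    SyncPred a P := by
  obtain ⟨⟨P1, P2, h1⟩, ⟨P3, P4, h2⟩⟩ := hs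
  exact ⟨⟨P1, P2, h.trans h1⟩, ⟨P3, P4, h.trans h2⟩⟩

lemma strEq_shuffleL (A X Q : Proc) : StrEq (Proc.par (Proc.par A X) Q) (Proc.par (Proc.par A Q) X) :=
  ((StrEq.comm _ _).trans (StrEq.assoc Q A X)).trans (StrEq.congPar (StrEq.comm Q A) (StrEq.refl _))

lemma syncPred_parL {a : ℕ} {P : Proc} (Q : Proc) (hs : SyncPred a P) :
    SyncPred a (Proc.par P Q) := by
  obtain ⟨⟨P1, P2, h1⟩, ⟨P3, P4, h2⟩⟩ := hs
  exact ⟨⟨Proc.par P1 Q, P2, ((StrEq.congPar h1 (StrEq.refl Q)).trans (strEq_shuffleL _ _ _))⟩,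
    ⟨Proc.par P3 Q, P4, ((StrEq.congPar h2 (StrEq.refl Q)).trans (strEq_shuffleL _ _ _))⟩⟩

lemma syncPred_parR {a : ℕ} (P : Proc) {Q : Proc} (hs : SyncPred a Q) :
    SyncPred a (Proc.par P Q) := by
  obtain ⟨⟨P1, P2, h1⟩, ⟨P3, P4, h2⟩⟩ := hs
  exact ⟨⟨Proc.par P P1, P2, (StrEq.congPar (StrEq.refl P) h1).trans (StrEq.assoc _ _ _)⟩,
    ⟨Proc.par P P3, P4, (StrEq.congPar (StrEq.refl P) h2).trans (StrEq.assoc _ _ _)⟩⟩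

lemma red_names_subset {P Q : Proc} (h : Red P Q) : names Q ⊆ names P := by
  induction h with
  | comm a P Q => intro x hx; simp [names] at hx ⊢; tauto
  | parL Q _ ih => exact Finset.union_subset_union_left ih
  | parR P _ ih => exact Finset.union_subset_union_right ih
  | str h1 _ h2 ih => rw [strEq_names h1, ← strEq_names h2]; exact ih

lemma red_lost {P Q : Proc} {a : ℕ} (h : Red P Q) (haP : a ∈ names P) (haQ : a ∉ names Q) :
    names P = insert a (names Q) ∧ SyncPred a P := by
  induction h with
  | comm b P Q =>
    simp only [names, Finset.mem_union, Finset.mem_insert, not_or] at haP haQ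
    have hab : a = b := by tauto
    subst hab
    refine ⟨?_, ⟨Proc.out a Q, P, StrEq.comm _ _⟩, ⟨Proc.inp a P, Q, StrEq.refl _⟩⟩
    simp only [names]
    rw [Finset.insert_union, Finset.union_insert, Finset.insert_idem]
  | parL Q hr ih =>
    rename_i P P'
    simp only [names, Finset.mem_union, not_or] at haP haQ
    have haP' : a ∈ names P := haP.resolve_right haQ.2
    obtain ⟨h1, h2⟩ := ih haP' haQ.1
    refine ⟨?_, syncPred_parL Q h2⟩
    simp only [names, h1, Finset.insert_union]
  | parR P hr ih =>
    rename_i Q Q'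
    simp only [names, Finset.mem_union, not_or] at haP haQ
    have haQ' : a ∈ names Q := haP.resolve_left haQ.1
    obtain ⟨h1, h2⟩ := ih haQ' haQ.2
    refine ⟨?_, syncPred_parR P h2⟩
    simp only [names, h1, Finset.union_insert]
  | str h1 hr h2 ih =>
    rw [strEq_names h1] at haP ⊢
    rw [← strEq_names h2] at haQ ⊢
    obtain ⟨e1, e2⟩ := ih haP haQ
    exact ⟨e1, syncPred_strEq h1 e2⟩

theorem reds_lost_name {P Q : Proc} (a : ℕ) (hlin : Linear P) (h : Reds P Q)
    (haP : a ∈ names P) (haQ : a ∉ names Q) :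
    ∃ Pa Pa' : Proc, Reds P Pa ∧ Red Pa Pa' ∧ Reds Pa' Q ∧
      a ∉ names Pa' ∧ names Pa = insert a (names Pa') ∧ SyncPred a Pa := by
  clear hlin
  induction h using Relation.ReflTransGen.head_induction_on with
  | refl => exact absurd haP haQ
  | head hstep hrest ih =>
    rename_i P R
    by_cases haR : a ∈ names R
    · obtain ⟨Pa, Pa', h1, h2, h3, h4, h5, h6⟩ := ih haR
      exact ⟨Pa, Pa', Relation.ReflTransGen.head hstep h1, h2, h3, h4, h5, h6⟩
    · obtain ⟨e1, e2⟩ := red_lost hstep haP haR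
      exact ⟨P, R, Relation.ReflTransGen.refl, hstep, hrest, haR, e1, e2⟩
end

section
/- The class CMP of complete processes is closed under reduction: if P is complete (for every name a, an input on a occurs somewhere in P if and only if an output on a occurs somewhere in P) and P →* Q, then Q is complete. -/
open Proc

lemma streq_inCount {P Q : Proc} (h : StrEq P Q) : ∀ a, inCount a P = inCount a Q := by
  induction h <;> intro a <;> simp_all [inCount] <;> omega

lemma streq_outCount {P Q : Proc} (h : StrEq P Q) : ∀ a, outCount a P = outCount a Q := by
  induction h <;> intro a <;> simp_all [outCount] <;> omega

lemma red_counts {P Q : Proc} (h : Red P Q) :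
    ∃ a, (∀ b, inCount b P = inCount b Q + (if a = b then 1 else 0)) ∧
         (∀ b, outCount b P = outCount b Q + (if a = b then 1 else 0)) := by
  induction h with
  | comm a P Q =>
      exact ⟨a, fun b => by simp [inCount]; omega, fun b => by simp [outCount]; omega⟩
  | parL Q _ ih =>
      obtain ⟨a, h1, h2⟩ := ih
      exact ⟨a, fun b => by simp [inCount, h1 b]; omega,
             fun b => by simp [outCount, h2 b]; omega⟩
  | parR P _ ih =>
      obtain ⟨a, h1, h2⟩ := ih
      exact ⟨a, fun b => by simp [inCount, h1 b]; omega,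
             fun b => by simp [outCount, h2 b]; omega⟩
  | str e1 _ e2 ih =>
      obtain ⟨a, h1, h2⟩ := ih
      exact ⟨a, fun b => by rw [streq_inCount e1, h1 b, streq_inCount e2],
             fun b => by rw [streq_outCount e1, h2 b, streq_outCount e2]⟩

lemma fill_inCount (a : ℕ) (C : Ctx) (Q : Proc) :
    inCount a Q ≤ inCount a (C.fill Q) := by
  induction C <;> simp [Ctx.fill, inCount] <;> omega

lemma fill_outCount (a : ℕ) (C : Ctx) (Q : Proc) :
    outCount a Q ≤ outCount a (C.fill Q) := by
  induction C <;> simp [Ctx.fill, outCount] <;> omega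

lemma streq_pad (P : Proc) : StrEq P (par nil P) :=
  StrEq.symm (StrEq.trans (StrEq.comm nil P) (StrEq.nilPar P))

lemma cin_iff (a : ℕ) (P : Proc) : CInPred a P ↔ 0 < inCount a P := by
  constructor
  · rintro ⟨C, Q, he, Q', Q'', hq⟩
    have h1 := streq_inCount he a
    have h2 := streq_inCount hq a
    have h3 := fill_inCount a C Q
    simp [inCount] at h2
    omega
  · intro h
    induction P with
    | nil => simp [inCount] at h
    | inp b P ih =>
        by_cases hb : b = a
        · subst hb
          exact ⟨Ctx.hole, inp b P, StrEq.refl _, nil, P, streq_pad _⟩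
        · simp [inCount, hb] at h
          obtain ⟨C, R, he, hi⟩ := ih h
          exact ⟨Ctx.inp b C, R, StrEq.congInp b he, hi⟩
    | out b P ih =>
        simp [inCount] at h
        obtain ⟨C, R, he, hi⟩ := ih h
        exact ⟨Ctx.out b C, R, StrEq.congOut b he, hi⟩
    | par P Q ih1 ih2 =>
        simp [inCount] at h
        rcases (show 0 < inCount a P ∨ 0 < inCount a Q by omega) with h | h
        · obtain ⟨C, R, he, hi⟩ := ih1 h
          exact ⟨Ctx.parR C Q, R, StrEq.congPar he (StrEq.refl Q), hi⟩
        · obtain ⟨C, R, he, hi⟩ := ih2 h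
          exact ⟨Ctx.parL P C, R, StrEq.congPar (StrEq.refl P) he, hi⟩

lemma cout_iff (a : ℕ) (P : Proc) : COutPred a P ↔ 0 < outCount a P := by
  constructor
  · rintro ⟨C, Q, he, Q', Q'', hq⟩
    have h1 := streq_outCount he a
    have h2 := streq_outCount hq a
    have h3 := fill_outCount a C Q
    simp [outCount] at h2
    omega
  · intro h
    induction P with
    | nil => simp [outCount] at h
    | out b P ih =>
        by_cases hb : b = a
        · subst hb
          exact ⟨Ctx.hole, out b P, StrEq.refl _, nil, P, streq_pad _⟩
        · simp [outCount, hb] at h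
          obtain ⟨C, R, he, hi⟩ := ih h
          exact ⟨Ctx.out b C, R, StrEq.congOut b he, hi⟩
    | inp b P ih =>
        simp [outCount] at h
        obtain ⟨C, R, he, hi⟩ := ih h
        exact ⟨Ctx.inp b C, R, StrEq.congInp b he, hi⟩
    | par P Q ih1 ih2 =>
        simp [outCount] at h
        rcases (show 0 < outCount a P ∨ 0 < outCount a Q by omega) with h | h
        · obtain ⟨C, R, he, hi⟩ := ih1 h
          exact ⟨Ctx.parR C Q, R, StrEq.congPar he (StrEq.refl Q), hi⟩
        · obtain ⟨C, R, he, hi⟩ := ih2 h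
          exact ⟨Ctx.parL P C, R, StrEq.congPar (StrEq.refl P) he, hi⟩

lemma step_preserve {P Q : Proc} (hlin : Linear P) (hc : Complete P) (h : Red P Q) :
    Linear Q ∧ Complete Q := by
  obtain ⟨a, h1, h2⟩ := red_counts h
  constructor
  · intro b
    have := hlin b
    have := h1 b; have := h2 b
    constructor <;> omega
  · intro b
    rw [cin_iff, cout_iff]
    have hcb := hc b
    rw [cin_iff, cout_iff] at hcb
    have := hlin b
    have := h1 b; have := h2 b
    by_cases hab : a = b <;> simp_all

theorem complete_preserved {P Q : Proc} (hlin : Linear P)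
    (hc : Complete P) (h : Reds P Q) : Complete Q := by
  suffices h' : Linear Q ∧ Complete Q from h'.2
  induction h with
  | refl => exact ⟨hlin, hc⟩
  | tail _ hstep ih => exact step_preserve ih.1 ih.2 hstep
end
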